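/- arXiv:2511.07340 — 3 statements merged into one kernel-verified Lean document; each statement's English description precedes it below -/
import Mathlib

section
/- For each fixed s, w > 0, the limit as m → ∞ of ∑_{k=0}^{m} binom(m,k) (-s/w)^k m!/(m+k)! equals exp(-s/w). -/
open Filter Finset Nat

/-- `(m+k)! = m! * ∏_{j<k} (m+1+j)`. -/
lemma fact_add_eq (m : ℕ) : ∀ k : ℕ, (m + k).factorial = m.factorial * ∏ j ∈ Finset.range k, (m + 1 + j)
  | 0 => by simp
  | k + 1 => by
      rw [Finset.prod_range_succ, ← Nat.mul_assoc, ← fact_add_eq m k, ← Nat.add_assoc,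
        Nat.factorial_succ, Nat.mul_comm]
      ring_nf

/-- Rewrite of the summand. -/
lemma term_eq (x : ℝ) (m k : ℕ) :
    (m.choose k : ℝ) * x ^ k * (m.factorial : ℝ) / ((m + k).factorial : ℝ)
      = x ^ k / (k.factorial : ℝ) *
        ((m.descFactorial k : ℝ) / ∏ j ∈ Finset.range k, ((m : ℝ) + 1 + j)) := by
  have h1 : (m.descFactorial k : ℝ) = (k.factorial : ℝ) * (m.choose k : ℝ) := by
    rw [← Nat.cast_mul, Nat.descFactorial_eq_factorial_mul_choose]
  have h2 : ((m + k).factorial : ℝ) = (m.factorial : ℝ) * ∏ j ∈ Finset.range k, ((m : ℝ) + 1 + j) := by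
    rw [fact_add_eq m k]
    push_cast
    ring
  have hk : (k.factorial : ℝ) ≠ 0 := Nat.cast_ne_zero.mpr k.factorial_ne_zero
  have hm : (m.factorial : ℝ) ≠ 0 := Nat.cast_ne_zero.mpr m.factorial_ne_zero
  have hp : (∏ j ∈ Finset.range k, ((m : ℝ) + 1 + j)) ≠ 0 := by
    apply Finset.prod_ne_zero_iff.mpr
    intro j _
    positivity
  rw [h1, h2]
  field_simp

lemma ratio_le_one (m k : ℕ) :
    (m.descFactorial k : ℝ) / ∏ j ∈ Finset.range k, ((m : ℝ) + 1 + j) ≤ 1 := by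
  have hp : (0:ℝ) < ∏ j ∈ Finset.range k, ((m : ℝ) + 1 + j) := by
    apply Finset.prod_pos; intro j _; positivity
  rw [div_le_one hp]
  have : (m.descFactorial k : ℝ) = ∏ j ∈ Finset.range k, ((m - j : ℕ) : ℝ) := by
    rw [← Nat.cast_prod, Nat.descFactorial_eq_prod_range]
  rw [this]
  apply Finset.prod_le_prod
  · intro j _; positivity
  · intro j _
    have : ((m - j : ℕ) : ℝ) ≤ (m : ℝ) := by
      exact_mod_cast Nat.cast_le.mpr (Nat.sub_le m j)
    have hj : (0:ℝ) ≤ (j:ℝ) := by positivity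
    linarith

lemma ratio_tendsto (k : ℕ) :
    Filter.Tendsto
      (fun m : ℕ => (m.descFactorial k : ℝ) / ∏ j ∈ Finset.range k, ((m : ℝ) + 1 + j))
      Filter.atTop (nhds 1) := by
  have key : Filter.Tendsto
      (fun m : ℕ => ∏ j ∈ Finset.range k, (((m : ℝ) - j) / ((m : ℝ) + 1 + j)))
      Filter.atTop (nhds 1) := by
    have := tendsto_finset_prod (f := fun (j : ℕ) (m : ℕ) =>
        ((m : ℝ) - j) / ((m : ℝ) + 1 + j)) (x := Filter.atTop)
        (a := fun _ => (1:ℝ)) (Finset.range k) ?_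
    · simpa using this
    · intro j _
      have hden : Filter.Tendsto (fun m : ℕ => (m : ℝ) + 1 + j) Filter.atTop Filter.atTop := by
        apply Filter.tendsto_atTop_add_const_right
        apply Filter.tendsto_atTop_add_const_right
        exact tendsto_natCast_atTop_atTop
      have h0 : Filter.Tendsto (fun m : ℕ => (1 + 2 * (j:ℝ)) / ((m : ℝ) + 1 + j))
          Filter.atTop (nhds 0) := tendsto_const_nhds.div_atTop hden
      have heq : ∀ m : ℕ, ((m : ℝ) - j) / ((m : ℝ) + 1 + j)
          = 1 - (1 + 2 * (j:ℝ)) / ((m : ℝ) + 1 + j) := by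
        intro m
        have hne : (m : ℝ) + 1 + j ≠ 0 := by positivity
        field_simp
        ring
      simp only [heq]
      have := (tendsto_const_nhds (x := (1:ℝ))).sub h0
      simpa using this
  apply key.congr'
  filter_upwards [Filter.eventually_ge_atTop k] with m hm
  rw [Nat.descFactorial_eq_prod_range, Nat.cast_prod, ← Finset.prod_div_distrib]
  apply Finset.prod_congr rfl
  intro j hj
  have hjm : j ≤ m := le_trans (le_of_lt (Finset.mem_range.mp hj)) hm
  rw [Nat.cast_sub hjm]

/-- For fixed `s, w > 0`,
`lim_{m→∞} ∑_{k=0}^m C(m,k) (-s/w)^k m!/(m+k)! = exp(-s/w)`. -/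
theorem stmt1 (s w : ℝ) (hs : 0 < s) (hw : 0 < w) :
    Filter.Tendsto
      (fun m : ℕ => ∑ k ∈ Finset.range (m + 1),
        (m.choose k : ℝ) * (-(s / w)) ^ k * (m.factorial : ℝ) / ((m + k).factorial : ℝ))
      Filter.atTop (nhds (Real.exp (-(s / w)))) := by
  set x : ℝ := -(s / w) with hxdef
  have hexp : Real.exp x = ∑' k : ℕ, x ^ k / (k.factorial : ℝ) := by
    rw [Real.exp_eq_exp_ℝ, NormedSpace.exp_eq_tsum_div]
  rw [hexp]
  set f : ℕ → ℕ → ℝ := fun m k =>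
    (m.choose k : ℝ) * x ^ k * (m.factorial : ℝ) / ((m + k).factorial : ℝ) with hf
  have key : Filter.Tendsto (fun m => ∑' k, f m k) Filter.atTop
      (nhds (∑' k, x ^ k / (k.factorial : ℝ))) := by
    apply tendsto_tsum_of_dominated_convergence
      (bound := fun k : ℕ => (s / w) ^ k / (k.factorial : ℝ))
    · exact Real.summable_pow_div_factorial (s / w)
    · intro k
      have := ((ratio_tendsto k).const_mul (x ^ k / (k.factorial : ℝ))).congr
        (fun m => (term_eq x m k).symm)
      simpa using this
    · filter_upwards with m k
      have hterm := term_eq x m k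
      rw [hf]
      simp only []
      rw [hterm]
      rw [Real.norm_eq_abs, abs_mul, abs_div, abs_pow]
      have hxabs : |x| = s / w := by
        rw [hxdef, abs_neg, abs_of_pos (by positivity)]
      have hfk : |(k.factorial : ℝ)| = (k.factorial : ℝ) := abs_of_pos (by positivity)
      rw [hxabs, hfk]
      have hr1 : |(m.descFactorial k : ℝ) / ∏ j ∈ Finset.range k, ((m : ℝ) + 1 + j)| ≤ 1 := by
        rw [abs_of_nonneg]
        · exact ratio_le_one m k
        · apply div_nonneg
          · positivity
          · apply Finset.prod_nonneg; intro j _; positivity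
      calc (s / w) ^ k / (k.factorial : ℝ) *
            |(m.descFactorial k : ℝ) / ∏ j ∈ Finset.range k, ((m : ℝ) + 1 + j)|
          ≤ (s / w) ^ k / (k.factorial : ℝ) * 1 := by
            apply mul_le_mul_of_nonneg_left hr1 (by positivity)
        _ = (s / w) ^ k / (k.factorial : ℝ) := by ring
  have hsum : ∀ m : ℕ, (∑' k, f m k) = ∑ k ∈ Finset.range (m + 1), f m k := by
    intro m
    apply tsum_eq_sum
    intro k hk
    have hkm : m < k := by
      by_contra h
      exact hk (Finset.mem_range.mpr (by omega))
    rw [hf]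
    simp [Nat.choose_eq_zero_of_lt hkm]
  exact key.congr hsum
end

section
/- The map T_w: ℝ → ℝ defined by T_w(x̃) = 0 if |x̃| ≤ w/2 and T_w(x̃) = x̃ - sign(x̃)·w/2 otherwise, pushes forward the probability measure with density π̃(x̃) = π_slab(0)·p_slab·1{|x̃| ≤ w/2} + p_slab·π_slab(x̃ - sign(x̃)w/2)·1{|x̃| > w/2} to the spike-and-slab measure (1-p_slab)δ_0 + p_slab·π_slab(x)dx, provided w = (1-p_slab)/(p_slab·π_slab(0)). -/
/-!
Split the line into the plateau `[-c, c]` (with `c = w/2`) and the two open half-lines beyond it.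
The collapsing map sends the plateau to `0`, carrying its mass `w · p π_slab(0) = 1 - p` onto the
atom, and acts on each half-line as a translation by `∓c` onto `(-∞, 0)` resp. `(0, ∞)`, where the
shifted density becomes `p π_slab` again. The two half-lines together miss only the null set `{0}`.
-/

open MeasureTheory Set
open scoped ENNReal

theorem Real.measurable_sign : Measurable Real.sign :=
  Monotone.measurable fun x y hxy => by
    rcases lt_trichotomy x 0 with hx | rfl | hx <;> rcases lt_trichotomy y 0 with hy | rfl | hy <;>
      simp [Real.sign_of_neg, Real.sign_of_pos, *] <;> linarith

namespace MeasureTheory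

theorem Measure.eq_restrict_Iio_add_restrict_Icc_add_restrict_Ioi (μ : Measure ℝ) {c : ℝ}
    (hc : 0 ≤ c) : μ = μ.restrict (Iio (-c)) + μ.restrict (Icc (-c) c) + μ.restrict (Ioi c) := by
  rw [← Measure.restrict_union
    ((Iio_disjoint_Ici le_rfl).mono_right Icc_subset_Ici_self) measurableSet_Icc,
    Iio_union_Icc_eq_Iic (by linarith), ← Measure.restrict_union (Iic_disjoint_Ioi le_rfl)
    measurableSet_Ioi, Iic_union_Ioi, Measure.restrict_univ]

namespace MeasurePreserving

variable {α β : Type*} [MeasurableSpace α] [MeasurableSpace β] {μ : Measure α} {ν : Measure β}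
  {e : α → β}

theorem map_withDensity_comp (he : MeasurePreserving e μ ν) {g : β → ℝ≥0∞} (hg : Measurable g) :
    (μ.withDensity (g ∘ e)).map e = ν.withDensity g := by
  ext s hs
  rw [Measure.map_apply he.measurable hs, withDensity_apply _ (he.measurable hs),
    withDensity_apply _ hs]
  exact he.setLIntegral_comp_preimage hs hg

theorem map_restrict_withDensity_of_eqOn (he : MeasurePreserving e μ ν) {g : β → ℝ≥0∞}
    (hg : Measurable g) {s : Set β} (hs : MeasurableSet s) {u : Set α} (hu : e ⁻¹' s = u)
    {T : α → β} (hT : EqOn T e u) {f : α → ℝ≥0∞} (hf : EqOn f (g ∘ e) u) :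
    ((μ.withDensity f).restrict u).map T = (ν.withDensity g).restrict s := by
  subst hu
  have hu := he.measurable hs
  have hfg : (μ.withDensity f).restrict (e ⁻¹' s)
      = (μ.withDensity (g ∘ e)).restrict (e ⁻¹' s) := by
    rw [restrict_withDensity hu, restrict_withDensity hu]
    exact withDensity_congr_ae (ae_restrict_of_forall_mem hu hf)
  rw [hfg, Measure.map_congr (ae_restrict_of_forall_mem hu hT),
    ← Measure.restrict_map he.measurable hs, he.map_withDensity_comp hg]

end MeasurePreserving

end MeasureTheory

/-- The map `T_w` of the paper is `collapse (w / 2)`. -/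
noncomputable def collapse (c x : ℝ) : ℝ := if |x| ≤ c then 0 else x - Real.sign x * c

namespace collapse

variable {c : ℝ}

theorem measurable (c : ℝ) : Measurable (collapse c) :=
  Measurable.ite (measurableSet_le measurable_abs measurable_const) measurable_const
    (measurable_id.sub (Real.measurable_sign.mul_const c))

theorem eqOn_Icc : EqOn (collapse c) 0 (Icc (-c) c) :=
  fun _ hx => if_pos (abs_le.2 hx)

theorem eqOn_Iio (hc : 0 ≤ c) : EqOn (collapse c) (· + c) (Iio (-c)) := fun x hx => by
  have hx : x < -c := hx
  simp [collapse, abs_of_neg (by linarith : x < 0), Real.sign_of_neg (by linarith : x < 0),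
    show ¬(-x ≤ c) by linarith]

theorem eqOn_Ioi (hc : 0 ≤ c) : EqOn (collapse c) (· - c) (Ioi c) := fun x hx => by
  have hx : c < x := hx
  simp [collapse, abs_of_pos (by linarith : 0 < x), Real.sign_of_pos (by linarith : 0 < x),
    show ¬(x ≤ c) by linarith]

end collapse

theorem map_collapse_withDensity {c : ℝ} (hc : 0 ≤ c) (a : ℝ≥0∞) {g : ℝ → ℝ≥0∞}
    (hg : Measurable g) :
    (volume.withDensity fun x => if |x| ≤ c then a else g (x - Real.sign x * c)).map (collapse c)
      = (ENNReal.ofReal (2 * c) * a) • Measure.dirac 0 + volume.withDensity g := by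
  set f := fun x => if |x| ≤ c then a else g (x - Real.sign x * c)
  have plateau : ((volume.withDensity f).restrict (Icc (-c) c)).map (collapse c)
      = (ENNReal.ofReal (2 * c) * a) • Measure.dirac 0 := by
    rw [Measure.map_congr (ae_restrict_of_forall_mem measurableSet_Icc collapse.eqOn_Icc),
      Pi.zero_def, Measure.map_const, Measure.restrict_apply_univ,
      withDensity_apply _ measurableSet_Icc,
      setLIntegral_congr_fun measurableSet_Icc fun x hx => if_pos (abs_le.2 hx),
      setLIntegral_const, Real.volume_Icc, mul_comm]
    ring_nf
  have off_plateau : ∀ x, c < |x| → f x = g (collapse c x) := fun x hx => by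
    simp [f, collapse, not_le.2 hx]
  have left : ((volume.withDensity f).restrict (Iio (-c))).map (collapse c)
      = (volume.withDensity g).restrict (Iio 0) := by
    refine (measurePreserving_add_right volume c).map_restrict_withDensity_of_eqOn hg
      measurableSet_Iio (by simp) (collapse.eqOn_Iio hc) fun x hx => ?_
    have hx : x < -c := hx
    rw [off_plateau x (lt_abs.2 (Or.inr (by linarith))), collapse.eqOn_Iio hc hx]
    rfl
  have right : ((volume.withDensity f).restrict (Ioi c)).map (collapse c)
      = (volume.withDensity g).restrict (Ioi 0) := by
    refine (measurePreserving_sub_right volume c).map_restrict_withDensity_of_eqOn hg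
      measurableSet_Ioi (by simp) (collapse.eqOn_Ioi hc) fun x hx => ?_
    have hx : c < x := hx
    rw [off_plateau x (lt_abs.2 (Or.inl hx)), collapse.eqOn_Ioi hc hx]
    rfl
  rw [(volume.withDensity f).eq_restrict_Iio_add_restrict_Icc_add_restrict_Ioi hc,
    Measure.map_add _ _ (collapse.measurable c), Measure.map_add _ _ (collapse.measurable c),
    plateau, left, right, add_right_comm, add_comm,
    ← Measure.restrict_union ((Iio_disjoint_Ici le_rfl).mono_right Ioi_subset_Ici_self)
      measurableSet_Ioi, Iio_union_Ioi, restrict_compl_singleton]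

theorem stmt8_general (πslab : ℝ → ℝ) (p w : ℝ)
    (hcont : Continuous πslab)
    (hpos : 0 < πslab 0)
    (hp : p ∈ Set.Ioo (0 : ℝ) 1)
    (hwdef : w = (1 - p) / (p * πslab 0)) :
    Measure.map (fun x : ℝ => if |x| ≤ w / 2 then 0 else x - Real.sign x * (w / 2))
        (volume.withDensity (fun x : ℝ => ENNReal.ofReal
          (if |x| ≤ w / 2 then πslab 0 * p
           else p * πslab (x - Real.sign x * (w / 2)))))
      = ENNReal.ofReal (1 - p) • Measure.dirac (0 : ℝ)
        + ENNReal.ofReal p • volume.withDensity (fun x => ENNReal.ofReal (πslab x)) := by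
  obtain ⟨hp0, hp1⟩ := hp
  have hw : 0 ≤ w / 2 := by
    rw [hwdef]
    exact div_nonneg (div_nonneg (sub_nonneg.2 hp1.le) (by positivity)) zero_le_two
  have plateau_mass : ENNReal.ofReal (2 * (w / 2)) * ENNReal.ofReal (πslab 0 * p)
      = ENNReal.ofReal (1 - p) := by
    rw [← ENNReal.ofReal_mul (by positivity), hwdef]
    field_simp
  have slab : volume.withDensity (fun x => ENNReal.ofReal (p * πslab x))
      = ENNReal.ofReal p • volume.withDensity (fun x => ENNReal.ofReal (πslab x)) := by
    simp_rw [ENNReal.ofReal_mul hp0.le]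
    exact withDensity_smul _ hcont.measurable.ennreal_ofReal
  have key := map_collapse_withDensity hw (ENNReal.ofReal (πslab 0 * p))
    (hcont.measurable.const_mul p).ennreal_ofReal
  rw [plateau_mass, slab] at key
  change (volume.withDensity _).map (collapse (w / 2)) = _
  convert key using 3
  exact funext fun x => apply_ite ENNReal.ofReal _ _ _

/-- The collapsing map `T_w` pushes the latent continuous density (plateau of height
`p·π_slab(0)` on `[-w/2, w/2]`, shifted slab outside) forward to the spike-and-slab
measure `(1-p)δ₀ + p·π_slab(x)dx`, when `w = (1-p)/(p·π_slab(0))`. -/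
theorem stmt8 (πslab : ℝ → ℝ) (p w : ℝ)
    (hcont : Continuous πslab) (hnn : ∀ x, 0 ≤ πslab x)
    (hint : ∫ x, πslab x = 1) (hpos : 0 < πslab 0)
    (hp : p ∈ Set.Ioo (0 : ℝ) 1)
    (hwdef : w = (1 - p) / (p * πslab 0)) :
    Measure.map (fun x : ℝ => if |x| ≤ w / 2 then 0 else x - Real.sign x * (w / 2))
        (volume.withDensity (fun x : ℝ => ENNReal.ofReal
          (if |x| ≤ w / 2 then πslab 0 * p
           else p * πslab (x - Real.sign x * (w / 2)))))
      = ENNReal.ofReal (1 - p) • Measure.dirac (0 : ℝ)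
        + ENNReal.ofReal p • volume.withDensity (fun x => ENNReal.ofReal (πslab x)) :=
  stmt8_general πslab p w hcont hpos hp hwdef
end

section
/- Let P_cond,s(m) = E[∏_{k=0}^m 1(s q_k < w) · ∏_{k=1}^m (1 − s q_k / w)] where (q_0,...,q_m) is uniform on the m-simplex. Then for s > w > 0, |E[∏_{k=1}^m (1 − s q_k/w)] − P_cond,s(m)| ≤ (m+1)(1 − w/s)^m · e^{s/w}, and hence the two expectations have the same limit as m → ∞. -/
open MeasureTheory

/-- The flat Dirichlet(1,…,1) distribution on the standard `m`-simplex in `ℝ^{m+1}`. -/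
noncomputable def dirichletFlat (m : ℕ) : Measure (Fin (m + 1) → ℝ) :=
  Measure.map (fun x => Fin.cons (1 - ∑ i, x i) x)
    ((m.factorial : ENNReal) •
      volume.restrict {x : Fin m → ℝ | (∀ i, 0 ≤ x i) ∧ ∑ i, x i ≤ 1})

/-!
Pulled back along `consResidual`, `dirichletFlat m` is `m!` times Lebesgue measure on the
corner simplex `{x ∈ ℝ^m | x ≥ 0, ∑ x ≤ 1}`, and the corner simplex of size `c` has volume at
most `c^m / m!`. The event `q_k ≥ t` lies in a translate of the corner simplex of size `1 - t`, so it
has probability at most `(1 - t)^m` (each `q_k` is Beta(1, m)); by the union bound the event that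
some `s q_k ≥ w` has probability at most `(m + 1)(1 - w/s)^m`. The two expectations differ by the
integral of `∏ (1 - s q_k / w)` over that event, and on the simplex
`|∏ (1 - s q_k / w)| ≤ exp (∑ s q_k / w) ≤ e^{s/w}`.
-/

open Set Finset
open scoped Nat

def cornerSimplex (m : ℕ) (c : ℝ) : Set (Fin m → ℝ) :=
  {x | (∀ i, 0 ≤ x i) ∧ ∑ i, x i ≤ c}

lemma isClosed_cornerSimplex (m : ℕ) (c : ℝ) : IsClosed (cornerSimplex m c) := by
  simp only [cornerSimplex, ofPred_and, ofPred_forall]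
  exact (isClosed_iInter fun i => isClosed_le continuous_const (continuous_apply i)).inter
    (isClosed_le (by fun_prop) continuous_const)

lemma cornerSimplex_eq_empty {m : ℕ} {c : ℝ} (hc : c < 0) : cornerSimplex m c = ∅ :=
  eq_empty_of_forall_notMem fun _ hx => hc.not_ge <| (sum_nonneg fun i _ => hx.1 i).trans hx.2

lemma cornerSimplex_succ (m : ℕ) (c : ℝ) :
    cornerSimplex (m + 1) c = MeasurableEquiv.piFinSuccAbove (fun _ => ℝ) 0 ⁻¹'
      {p | 0 ≤ p.1 ∧ p.2 ∈ cornerSimplex m (c - p.1)} := by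
  ext x
  simp only [cornerSimplex, mem_ofPred_eq, preimage_ofPred_eq,
    MeasurableEquiv.piFinSuccAbove_apply, Fin.insertNthEquiv_zero, Fin.consEquiv_symm_apply,
    Fin.forall_fin_succ, Fin.sum_univ_succ, Fin.tail, le_sub_iff_add_le']
  tauto

lemma integral_sub_pow_div_factorial (m : ℕ) {c : ℝ} (hc : 0 ≤ c) :
    ∫ a in Icc 0 c, (c - a) ^ m / m ! = c ^ (m + 1) / (m + 1)! := by
  rw [integral_Icc_eq_integral_Ioc, ← intervalIntegral.integral_of_le hc,
    intervalIntegral.integral_div, intervalIntegral.integral_comp_sub_left (· ^ m)]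
  simp [Nat.factorial_succ, field]

lemma volume_cornerSimplex_le (m : ℕ) (c : ℝ) :
    volume (cornerSimplex m c) ≤ ENNReal.ofReal (c ^ m / m !) := by
  rcases lt_or_ge c 0 with hc | hc
  · simp [cornerSimplex_eq_empty hc]
  induction m generalizing c with
  | zero => simp [cornerSimplex, hc, volume_pi]
  | succ m ih =>
    set S := {p : ℝ × (Fin m → ℝ) | 0 ≤ p.1 ∧ p.2 ∈ cornerSimplex m (c - p.1)}
    have hS : MeasurableSet S := by
      change MeasurableSet ({p : ℝ × (Fin m → ℝ) | 0 ≤ p.1} ∩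
        ({p | ∀ i, 0 ≤ p.2 i} ∩ {p | ∑ i, p.2 i ≤ c - p.1}))
      rw [ofPred_forall]
      exact (measurableSet_le measurable_const measurable_fst).inter
        ((MeasurableSet.iInter fun i => measurableSet_le measurable_const (by fun_prop)).inter
          (measurableSet_le (by fun_prop) (by fun_prop)))
    have hslice : ∀ a, volume (Prod.mk a ⁻¹' S) ≤
        (Icc 0 c).indicator (fun a => ENNReal.ofReal ((c - a) ^ m / m !)) a := by
      intro a
      by_cases ha : a ∈ Icc 0 c
      · rw [indicator_of_mem ha]
        exact (measure_mono fun y hy => hy.2).trans (ih _ (sub_nonneg.2 ha.2))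
      · rw [indicator_of_notMem ha]
        rcases not_and_or.1 ha with ha | ha
        · simp [S, ha, Set.preimage]
        · simp [S, cornerSimplex_eq_empty (sub_neg.2 (not_le.1 ha))]
    calc volume (cornerSimplex (m + 1) c)
        = ∫⁻ a, volume (Prod.mk a ⁻¹' S) := by
          rw [cornerSimplex_succ, (volume_preserving_piFinSuccAbove _ 0).measure_preimage
            hS.nullMeasurableSet, Measure.volume_eq_prod, Measure.prod_apply hS]
      _ ≤ ∫⁻ a in Icc 0 c, ENNReal.ofReal ((c - a) ^ m / m !) := by
          rw [← lintegral_indicator measurableSet_Icc]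
          exact lintegral_mono hslice
      _ = ENNReal.ofReal (c ^ (m + 1) / (m + 1)!) := by
          rw [← integral_sub_pow_div_factorial m hc, ofReal_integral_eq_lintegral_ofReal]
          · exact Continuous.integrableOn_Icc (by fun_prop)
          · filter_upwards [ae_restrict_mem measurableSet_Icc] with a ha
            have := sub_nonneg.2 ha.2
            positivity

def consResidual {m : ℕ} (x : Fin m → ℝ) : Fin (m + 1) → ℝ := Fin.cons (1 - ∑ i, x i) x

lemma continuous_consResidual (m : ℕ) : Continuous (consResidual (m := m)) :=
  continuous_pi <| Fin.cases (by simpa [consResidual] using by fun_prop)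
    fun j => by simpa [consResidual] using continuous_apply j

lemma dirichletFlat_eq (m : ℕ) : dirichletFlat m =
    ((m ! : ENNReal) • volume.restrict (cornerSimplex m 1)).map consResidual :=
  rfl

lemma dirichletFlat_apply (m : ℕ) {S : Set (Fin (m + 1) → ℝ)} (hS : MeasurableSet S) :
    dirichletFlat m S = m ! * volume (consResidual ⁻¹' S ∩ cornerSimplex m 1) := by
  have hT := (continuous_consResidual m).measurable
  rw [dirichletFlat_eq, Measure.map_apply hT hS, Measure.smul_apply, smul_eq_mul,
    Measure.restrict_apply (hS.preimage hT)]

instance (m : ℕ) : IsFiniteMeasure (dirichletFlat m) where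
  measure_univ_lt_top := by
    rw [dirichletFlat_apply m MeasurableSet.univ]
    exact ENNReal.mul_lt_top (ENNReal.natCast_lt_top _) <|
      (measure_mono inter_subset_right).trans_lt <|
        (volume_cornerSimplex_le m 1).trans_lt ENNReal.ofReal_lt_top

lemma ae_dirichletFlat_tail_mem (m : ℕ) :
    ∀ᵐ q ∂dirichletFlat m, (Fin.tail q : Fin m → ℝ) ∈ cornerSimplex m 1 := by
  have hK := (isClosed_cornerSimplex m 1).measurableSet
  rw [dirichletFlat_eq, ae_map_iff (continuous_consResidual m).measurable.aemeasurable
    (hK.preimage (by fun_prop))]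
  refine Measure.ae_smul_measure ?_ _
  simpa [consResidual] using ae_restrict_mem hK

lemma exists_add_mem_cornerSimplex {m : ℕ} (k : Fin (m + 1)) (t : ℝ) :
    ∃ v : Fin m → ℝ, ∀ x ∈ cornerSimplex m 1, t ≤ consResidual x k →
      x + v ∈ cornerSimplex m (1 - t) := by
  cases k using Fin.cases with
  | zero =>
    refine ⟨0, fun x hx hxt => ⟨fun i => by simpa using hx.1 i, ?_⟩⟩
    simp only [consResidual, Fin.cons_zero] at hxt
    simpa using (by linarith : ∑ i, x i ≤ 1 - t)
  | succ j =>
    refine ⟨-Pi.single j t, fun x hx hxt => ⟨fun i => ?_, ?_⟩⟩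
    · simp only [consResidual, Fin.cons_succ] at hxt
      rcases eq_or_ne i j with rfl | hij
      · simpa using hxt
      · simpa [hij] using hx.1 i
    · simpa [sum_add_distrib] using (by linarith [hx.2] : ∑ i, x i - t ≤ 1 - t)

lemma dirichletFlat_setOf_le_coord_le (m : ℕ) (k : Fin (m + 1)) (t : ℝ) :
    dirichletFlat m {q | t ≤ q k} ≤ ENNReal.ofReal ((1 - t) ^ m) := by
  obtain ⟨v, hv⟩ := exists_add_mem_cornerSimplex k t
  rw [dirichletFlat_apply m (measurableSet_le measurable_const (measurable_pi_apply k))]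
  calc (m ! : ENNReal) * volume (consResidual ⁻¹' {q | t ≤ q k} ∩ cornerSimplex m 1)
      ≤ m ! * volume ((· + v) ⁻¹' cornerSimplex m (1 - t)) := by
        gcongr
        exact fun x hx => hv x hx.2 hx.1
    _ ≤ m ! * ENNReal.ofReal ((1 - t) ^ m / m !) := by
        rw [measure_preimage_add_right]
        gcongr
        exact volume_cornerSimplex_le m _
    _ = ENNReal.ofReal ((1 - t) ^ m) := by
        rw [← ENNReal.ofReal_natCast, ← ENNReal.ofReal_mul (by positivity),
          mul_div_cancel₀ _ (by positivity)]

lemma dirichletFlat_setOf_exists_le_coord_le (m : ℕ) (t : ℝ) :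
    dirichletFlat m {q | ∃ k, t ≤ q k} ≤ ENNReal.ofReal ((m + 1) * (1 - t) ^ m) := by
  calc dirichletFlat m {q | ∃ k, t ≤ q k}
      ≤ ∑ k : Fin (m + 1), dirichletFlat m {q | t ≤ q k} := by
        rw [ofPred_exists]
        exact measure_iUnion_fintype_le _ _
    _ ≤ ∑ _k : Fin (m + 1), ENNReal.ofReal ((1 - t) ^ m) :=
        sum_le_sum fun k _ => dirichletFlat_setOf_le_coord_le m k t
    _ = ENNReal.ofReal ((m + 1) * (1 - t) ^ m) := by
        rw [sum_const, card_univ, Fintype.card_fin, nsmul_eq_mul,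
          ENNReal.ofReal_mul (by positivity)]
        norm_cast

lemma abs_prod_one_sub_le_exp_sum {ι : Type*} (s : Finset ι) {x : ι → ℝ}
    (hx : ∀ i ∈ s, 0 ≤ x i) : |∏ i ∈ s, (1 - x i)| ≤ Real.exp (∑ i ∈ s, x i) := by
  rw [abs_prod, Real.exp_sum]
  refine prod_le_prod (fun i _ => abs_nonneg _) fun i hi => abs_le.2 ⟨?_, ?_⟩
  · linarith [Real.add_one_le_exp (x i), hx i hi]
  · linarith [Real.one_le_exp (hx i hi), hx i hi]

lemma dirichletFlat_abs_integral_sub_integral_indicator_le (s w : ℝ) (hw : 0 < w) (hs : w < s)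
    (m : ℕ) :
    |(∫ q, ∏ k : Fin m, (1 - s * q k.succ / w) ∂(dirichletFlat m))
      - ∫ q, Set.indicator {q : Fin (m + 1) → ℝ | ∀ k, s * q k < w}
          (fun q => ∏ k : Fin m, (1 - s * q k.succ / w)) q ∂(dirichletFlat m)|
      ≤ ((m : ℝ) + 1) * (1 - w / s) ^ m * Real.exp (s / w) := by
  set f := fun q : Fin (m + 1) → ℝ => ∏ k : Fin m, (1 - s * q k.succ / w)
  set A := {q : Fin (m + 1) → ℝ | ∀ k, s * q k < w}
  have hs0 : 0 < s := hw.trans hs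
  have hA : MeasurableSet A := by
    simp only [A, ofPred_forall]
    exact .iInter fun k => measurableSet_lt (by fun_prop) measurable_const
  have hAc : Aᶜ = {q | ∃ k, w / s ≤ q k} := by
    ext q
    simp [A, div_le_iff₀' hs0]
  have hf_le : ∀ᵐ q ∂dirichletFlat m, ‖f q‖ ≤ Real.exp (s / w) := by
    filter_upwards [ae_dirichletFlat_tail_mem m] with q hq
    have hnonneg : ∀ k ∈ (Finset.univ : Finset (Fin m)), 0 ≤ s / w * q k.succ := fun k _ =>
      mul_nonneg (by positivity) (hq.1 k)
    calc ‖f q‖ = |∏ k : Fin m, (1 - s / w * q k.succ)| := by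
          simp only [f, Real.norm_eq_abs, mul_div_right_comm]
      _ ≤ Real.exp (∑ k : Fin m, s / w * q k.succ) := abs_prod_one_sub_le_exp_sum _ hnonneg
      _ ≤ Real.exp (s / w) := by
          rw [← mul_sum]
          gcongr
          exact mul_le_of_le_one_right (by positivity) hq.2
  have hf : Integrable f (dirichletFlat m) :=
    .of_bound (Continuous.aestronglyMeasurable (by fun_prop)) _ hf_le
  have htail : (dirichletFlat m).real Aᶜ ≤ (m + 1) * (1 - w / s) ^ m := by
    refine ENNReal.toReal_le_of_le_ofReal ?_
      (hAc ▸ dirichletFlat_setOf_exists_le_coord_le m (w / s))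
    have : 0 ≤ 1 - w / s := by linarith [(div_le_one hs0).2 hs.le]
    positivity
  rw [integral_indicator hA, ← Real.norm_eq_abs]
  calc _ ≤ (dirichletFlat m).real Aᶜ * Real.exp (s / w) :=
        norm_integral_sub_setIntegral_le hf_le hA hf
    _ ≤ _ := by gcongr

/-- For `s > w > 0` and `(q_0,…,q_m) ~ Dirichlet(1,…,1)`,
`|E[∏_{k=1}^m (1 − s q_k/w)] − E[∏_{k=0}^m 1(s q_k < w) ∏_{k=1}^m (1 − s q_k/w)]|
  ≤ (m+1)(1 − w/s)^m e^{s/w}`, and hence the two expectations have the same limit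
as `m → ∞` (their difference tends to `0`). -/
theorem stmt16 (s w : ℝ) (hw : 0 < w) (hs : w < s) :
    (∀ m : ℕ,
      |(∫ q, ∏ k : Fin m, (1 - s * q k.succ / w) ∂(dirichletFlat m))
        - ∫ q, Set.indicator {q : Fin (m + 1) → ℝ | ∀ k, s * q k < w}
            (fun q => ∏ k : Fin m, (1 - s * q k.succ / w)) q ∂(dirichletFlat m)|
        ≤ ((m : ℝ) + 1) * (1 - w / s) ^ m * Real.exp (s / w)) ∧
    Filter.Tendsto
      (fun m : ℕ =>
        (∫ q, ∏ k : Fin m, (1 - s * q k.succ / w) ∂(dirichletFlat m))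
          - ∫ q, Set.indicator {q : Fin (m + 1) → ℝ | ∀ k, s * q k < w}
              (fun q => ∏ k : Fin m, (1 - s * q k.succ / w)) q ∂(dirichletFlat m))
      Filter.atTop (nhds 0) := by
  have hs0 : 0 < s := hw.trans hs
  have hr0 : 0 ≤ 1 - w / s := by linarith [(div_le_one hs0).2 hs.le]
  have hr1 : 1 - w / s < 1 := by linarith [div_pos hw hs0]
  have bound := dirichletFlat_abs_integral_sub_integral_indicator_le s w hw hs
  refine ⟨bound, squeeze_zero_norm bound ?_⟩
  simpa [add_mul] using ((tendsto_self_mul_const_pow_of_lt_one hr0 hr1).add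
    (tendsto_pow_atTop_nhds_zero_of_lt_one hr0 hr1)).mul_const (Real.exp (s / w))
end
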